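/- arXiv:1912.07223 — 5 statements merged into one kernel-verified Lean document; each statement's English description precedes it below -/
import Mathlib

section
/- Let p be a prime and let Q(x) and R(x) be monic polynomials in ℚ_p[x]. Let β_1, …, β_m be the roots of Q(x) and α_1, …, α_n the roots of R(x), listed with multiplicity in a fixed algebraic closure of ℚ_p. Suppose that for every polynomial P(x) ∈ ℤ[x] one has v_p(∏_{i=1}^m P(β_i)) ≤ v_p(∏_{i=1}^n P(α_i)); here both products are symmetric in the roots and hence lie in ℚ_p (since Q and R are monic they equal the resultants Res(Q,P) and Res(R,P) respectively), and v_p denotes the p-adic valuation on ℚ_p. Then the multiset {β_1, …, β_m} is a submultiset of {α_1, …, α_n}; equivalently, Q(x) divides R(x) in ℚ_p[x]. -/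
/-!
Since `Q` and `R` are monic, the products in the hypothesis are the resultants `Res(Q, P)` and
`Res(R, P)`. These depend continuously on the coefficients of `P`, and `ℤ` is dense in `ℤ_p`, so
`‖Res(R, P)‖ ≤ ‖Res(Q, P)‖` extends to every `P` with coefficients in `ℤ_p`.

If `Q ∤ R`, some prime `f` satisfies `f ^ (l + 1) ∣ Q` and `R = f ^ l * R'` with `f ∤ R'`. For a
small `c ≠ 0`, put `P_ε = c f + ε`. As `ε → 0`, `Res(f, P_ε)` is nonzero and tends to
`Res(f, c f) = 0`, but `Res(R', P_ε)` tends to `Res(R', c f) ≠ 0`. Multiplicativity of the resultant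
then gives `‖Res(R', P_ε)‖ ≤ ‖Res(f, P_ε)‖ ‖Res(Q', P_ε)‖ → 0`, which is a contradiction.
-/

open Polynomial Filter Topology

namespace UniqueFactorizationMonoid

theorem exists_prime_pow_succ_mul_of_not_dvd {α : Type*} [CommMonoidWithZero α]
    [UniqueFactorizationMonoid α] {a b : α} (ha : a ≠ 0) (hb : b ≠ 0) (h : ¬a ∣ b) :
    ∃ q l a' b', Prime q ∧ a = q ^ (l + 1) * a' ∧ b = q ^ l * b' ∧ ¬q ∣ b' := by
  rw [dvd_iff_emultiplicity_le ha] at h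
  push Not at h
  obtain ⟨q, hq, hlt⟩ := h
  have hfin := FiniteMultiplicity.of_not_isUnit hq.not_isUnit hb
  obtain ⟨b', hb', hqb'⟩ := hfin.exists_eq_pow_mul_and_not_dvd
  rw [hfin.emultiplicity_eq_multiplicity] at hlt
  obtain ⟨a', ha'⟩ := pow_dvd_of_le_emultiplicity (Order.add_one_le_of_lt hlt)
  exact ⟨q, _, a', b', hq, ha', hb', hqb'⟩

end UniqueFactorizationMonoid

theorem eq_zero_of_tendsto_of_norm_pow_mul_le {ι K : Type*} [NormedField K] {F : Filter ι}
    [F.NeBot] {r a b : ι → K} {A B : K} {l : ℕ} (hr : Tendsto r F (𝓝 0))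
    (ha : Tendsto a F (𝓝 A)) (hb : Tendsto b F (𝓝 B))
    (h : ∀ᶠ i in F, r i ≠ 0 ∧ ‖r i ^ l * b i‖ ≤ ‖r i ^ (l + 1) * a i‖) : B = 0 := by
  have hle : ∀ᶠ i in F, ‖b i‖ ≤ ‖r i * a i‖ := h.mono fun i ⟨hr0, hi⟩ => by
    rw [pow_succ, mul_assoc, norm_mul, norm_mul (r i ^ l)] at hi
    exact le_of_mul_le_mul_left hi (norm_pos_iff.2 (pow_ne_zero l hr0))
  simpa using le_of_tendsto_of_tendsto hb.norm (hr.mul ha).norm hle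

namespace Polynomial

theorem Monic.algebraMap_resultant {K L : Type*} [Field K] [Field L] [Algebra K L] {f : K[X]}
    (hf : f.Monic) (hs : (f.map (algebraMap K L)).Splits) {g : K[X]} {n : ℕ}
    (hg : g.natDegree ≤ n) :
    algebraMap K L (f.resultant g f.natDegree n) =
      ((f.map (algebraMap K L)).roots.map fun x => aeval x g).prod := by
  rw [← resultant_map_map, ← natDegree_map_eq_of_injective (algebraMap K L).injective f,
    resultant_eq_prod_eval _ _ n (natDegree_map_le.trans hg) hs, (hf.map _).leadingCoeff,
    one_pow, one_mul]
  simp only [eval_map_algebraMap]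

theorem continuous_resultant {X R : Type*} [TopologicalSpace X] [CommRing R] [TopologicalSpace R]
    [IsTopologicalRing R] {f g : X → R[X]} (m n : ℕ)
    (hf : ∀ k, Continuous fun x => (f x).coeff k) (hg : ∀ k, Continuous fun x => (g x).coeff k) :
    Continuous fun x => (f x).resultant (g x) m n := by
  refine Continuous.matrix_det (continuous_pi fun i => continuous_pi fun j => ?_)
  refine j.addCases (fun j => ?_) (fun j => ?_) <;>
    simp only [sylvester, Matrix.of_apply, Fin.addCases_left, Fin.addCases_right] <;>
    split_ifs
  exacts [hg _, continuous_const, hf _, continuous_const]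

theorem continuous_coeff_ofFn {R : Type*} [Semiring R] [DecidableEq R] [TopologicalSpace R]
    (n k : ℕ) : Continuous fun v : Fin n → R => (ofFn n v).coeff k := by
  by_cases hk : k < n
  · simpa only [ofFn_coeff_eq_val_of_lt _ hk] using continuous_apply _
  · simpa only [ofFn_coeff_eq_zero_of_ge _ (not_lt.1 hk)] using continuous_const

theorem map_ofFn {R S : Type*} [Semiring R] [Semiring S] [DecidableEq R] [DecidableEq S]
    (φ : R →+* S) (n : ℕ) (v : Fin n → R) : (ofFn n v).map φ = ofFn n (φ ∘ v) := by
  ext k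
  rw [coeff_map]
  by_cases hk : k < n
  · simp [hk]
  · simp [not_lt.1 hk]

theorem resultant_pow_mul_left {R : Type*} [CommRing R] [IsDomain R] {f g P : R[X]} (hf : f ≠ 0)
    (hg : g ≠ 0) (k : ℕ) {n : ℕ} (hP : P.natDegree ≤ n) :
    (f ^ k * g).resultant P (f ^ k * g).natDegree n =
      f.resultant P f.natDegree n ^ k * g.resultant P g.natDegree n := by
  rw [natDegree_mul (pow_ne_zero k hf) hg, resultant_mul_left _ _ _ _ hP,
    resultant_pow_left (hf := pow_ne_zero _ (leadingCoeff_ne_zero.2 hf)) (hn := hP)]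

theorem exists_ne_zero_forall_norm_mul_coeff_lt_one {K : Type*} [NontriviallyNormedField K]
    (f : K[X]) : ∃ c : K, c ≠ 0 ∧ ∀ i, ‖c * f.coeff i‖ < 1 := by
  have hsmall (i : ℕ) : ∀ᶠ c in 𝓝[≠] (0 : K), ‖c * f.coeff i‖ < 1 := by
    refine Filter.Tendsto.eventually_lt_const one_pos ?_ |>.filter_mono nhdsWithin_le_nhds
    simpa using ((continuous_mul_const (f.coeff i)).tendsto 0).norm
  obtain ⟨c, hc, hc0⟩ :=
    ((eventually_all_finset f.support).2 fun i _ => hsmall i).and self_mem_nhdsWithin |>.exists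
  refine ⟨c, hc0, fun i => ?_⟩
  by_cases hi : i ∈ f.support
  · exact hc i hi
  · simp [notMem_support_iff.1 hi]

theorem tendsto_resultant_add_C {R : Type*} [CommRing R] [TopologicalSpace R]
    [IsTopologicalRing R] (f g : R[X]) (m n : ℕ) :
    Tendsto (fun ε => f.resultant (g + C ε) m n) (𝓝 0) (𝓝 (f.resultant g m n)) := by
  have hcont := continuous_resultant (f := fun _ : R => f) (g := fun ε => g + C ε) m n
    (fun _ => continuous_const) fun k => by
      simp only [coeff_add, coeff_C]
      split_ifs
      exacts [continuous_const.add continuous_id, continuous_const]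
  have := hcont.tendsto 0
  rwa [map_zero, add_zero] at this

theorem dvd_of_forall_norm_resultant_le {K : Type*} [NontriviallyNormedField K]
    {Q R : K[X]} (hQ : Q ≠ 0)
    (h : ∀ P : K[X], (∀ i, ‖P.coeff i‖ ≤ 1) → ‖R.resultant P‖ ≤ ‖Q.resultant P‖) : Q ∣ R := by
  rcases eq_or_ne R 0 with rfl | hR
  · exact dvd_zero Q
  by_contra hQR
  obtain ⟨f, l, Q', R', hf, rfl, rfl, hfR'⟩ :=
    UniqueFactorizationMonoid.exists_prime_pow_succ_mul_of_not_dvd hQ hR hQR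
  obtain ⟨c, hc0, hc⟩ := exists_ne_zero_forall_norm_mul_coeff_lt_one f
  have hdeg (ε : K) : (C c * f + C ε).natDegree = f.natDegree := by
    rw [natDegree_add_C, natDegree_C_mul hc0]
  have hlim (g : K[X]) := (tendsto_resultant_add_C g (C c * f) g.natDegree f.natDegree).mono_left
    (nhdsWithin_le_nhds (s := {0}ᶜ))
  have hcoeff : ∀ᶠ ε in 𝓝[≠] 0, ∀ i, ‖(C c * f + C ε).coeff i‖ ≤ 1 := by
    have h0 : ∀ᶠ ε in 𝓝[≠] (0 : K), ‖c * f.coeff 0 + ε‖ < 1 := by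
      refine Filter.Tendsto.eventually_lt_const (hc 0) ?_ |>.filter_mono nhdsWithin_le_nhds
      simpa using ((continuous_const_add (c * f.coeff 0)).tendsto 0).norm
    filter_upwards [h0] with ε hε i
    rcases eq_or_ne i 0 with rfl | hi
    · simpa using hε.le
    · simpa [coeff_C, hi] using (hc i).le
  have hr (ε : K) (hε : ε ≠ 0) : f.resultant (C c * f + C ε) f.natDegree f.natDegree ≠ 0 := by
    have hunit : IsCoprime f (C ε) := by
      simpa using (isCoprime_mul_unit_left_right (isUnit_C.2 hε.isUnit) f 1).2 isCoprime_one_right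
    have := resultant_ne_zero f (C c * f + C ε) (by simpa [add_comm, mul_comm] using hunit)
    rwa [hdeg] at this
  have hzero : f.resultant (C c * f) f.natDegree f.natDegree = 0 := by
    rw [resultant_C_mul_right, resultant_self, zero_pow hf.irreducible.natDegree_pos.ne', mul_zero]
  have hB : R'.resultant (C c * f) R'.natDegree f.natDegree ≠ 0 := by
    have := resultant_ne_zero R' (C c * f) <| (isCoprime_mul_unit_left_right
      (isUnit_C.2 hc0.isUnit) _ _).2 (hf.irreducible.coprime_iff_not_dvd.2 hfR').symm
    rwa [natDegree_C_mul hc0] at this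
  refine hB (eq_zero_of_tendsto_of_norm_pow_mul_le (l := l) (hzero ▸ hlim f) (hlim Q') (hlim R') ?_)
  filter_upwards [hcoeff, self_mem_nhdsWithin] with ε hε hε0
  refine ⟨hr ε hε0, ?_⟩
  have := h _ hε
  rwa [hdeg, resultant_pow_mul_left hf.ne_zero (right_ne_zero_of_mul hR) _ (hdeg ε).le,
    resultant_pow_mul_left hf.ne_zero (right_ne_zero_of_mul hQ) _ (hdeg ε).le] at this

end Polynomial

namespace Padic

variable {p : ℕ} [Fact p.Prime]

theorem mem_of_isClosed_of_forall_intCast_mem {ι : Type*} {s : Set (ι → ℚ_[p])} (hs : IsClosed s)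
    (hint : ∀ u : ι → ℤ, (fun i => (u i : ℚ_[p])) ∈ s) {v : ι → ℚ_[p]} (hv : ∀ i, ‖v i‖ ≤ 1) :
    v ∈ s := by
  have hdense : DenseRange (Pi.map fun _ : ι => (Int.cast : ℤ → ℤ_[p])) :=
    DenseRange.piMap fun _ => PadicInt.denseRange_intCast
  exact hdense.induction_on (p := fun w : ι → ℤ_[p] => (fun i => (w i : ℚ_[p])) ∈ s)
    (fun i => ⟨v i, hv i⟩)
    (hs.preimage (continuous_pi fun i => continuous_subtype_val.comp (continuous_apply i)))
    fun u => by simpa using hint u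

theorem norm_resultant_le_of_forall_int {f g : ℚ_[p][X]} {m₁ m₂ n : ℕ}
    (h : ∀ P : ℤ[X], P.natDegree ≤ n →
      ‖g.resultant (P.map (algebraMap ℤ ℚ_[p])) m₂ n‖ ≤
        ‖f.resultant (P.map (algebraMap ℤ ℚ_[p])) m₁ n‖)
    {P : ℚ_[p][X]} (hP : P.natDegree ≤ n) (hP1 : ∀ i, ‖P.coeff i‖ ≤ 1) :
    ‖g.resultant P m₂ n‖ ≤ ‖f.resultant P m₁ n‖ := by
  classical
  rw [← ofFn_comp_toFn_eq_id_of_natDegree_lt (Nat.lt_succ_of_le hP)]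
  have hcont (q : ℚ_[p][X]) (m : ℕ) :
      Continuous fun v : Fin (n + 1) → ℚ_[p] => ‖q.resultant (ofFn (n + 1) v) m n‖ :=
    (continuous_resultant m n (fun _ => continuous_const) (continuous_coeff_ofFn _)).norm
  refine mem_of_isClosed_of_forall_intCast_mem (isClosed_le (hcont g m₂) (hcont f m₁))
    (fun u => ?_) fun i => hP1 i
  have := h (ofFn (n + 1) u) (Nat.le_of_lt_succ (ofFn_natDegree_lt n.succ_pos' u))
  rwa [map_ofFn] at this

end Padic

/-- Let `p` be a prime and `Q, R` monic polynomials over `ℚ_p`, with roots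
`β₁, …, β_m` and `α₁, …, α_n` (with multiplicity) in a fixed algebraic closure
of `ℚ_p`.  Suppose that for every `P ∈ ℤ[x]`, the `p`-adic valuation of
`∏ᵢ P(βᵢ)` is at most that of `∏ᵢ P(αᵢ)` (both products are symmetric in the
roots, hence lie in `ℚ_p`; in terms of the `p`-adic norm, `‖∏ᵢ P(βᵢ)‖ ≥ ‖∏ᵢ P(αᵢ)‖`).
Then `Q` divides `R` in `ℚ_p[x]`, i.e. the multiset of roots of `Q` is a
submultiset of the multiset of roots of `R`. -/
theorem stmt0 (p : ℕ) [Fact p.Prime] (Q R : Polynomial ℚ_[p])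
    (hQ : Q.Monic) (hR : R.Monic)
    (h : ∀ P : Polynomial ℤ, ∀ a b : ℚ_[p],
      algebraMap ℚ_[p] (AlgebraicClosure ℚ_[p]) a =
        (((Q.map (algebraMap ℚ_[p] (AlgebraicClosure ℚ_[p]))).roots).map
          (fun β => Polynomial.aeval β P)).prod →
      algebraMap ℚ_[p] (AlgebraicClosure ℚ_[p]) b =
        (((R.map (algebraMap ℚ_[p] (AlgebraicClosure ℚ_[p]))).roots).map
          (fun α => Polynomial.aeval α P)).prod →
      ‖b‖ ≤ ‖a‖) :
    Q ∣ R ∧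
      (Q.map (algebraMap ℚ_[p] (AlgebraicClosure ℚ_[p]))).roots ≤
        (R.map (algebraMap ℚ_[p] (AlgebraicClosure ℚ_[p]))).roots := by
  have hint (n : ℕ) (P : ℤ[X]) (hP : P.natDegree ≤ n) :
      ‖R.resultant (P.map (algebraMap ℤ ℚ_[p])) R.natDegree n‖ ≤
        ‖Q.resultant (P.map (algebraMap ℤ ℚ_[p])) Q.natDegree n‖ := by
    have hroots {S : ℚ_[p][X]} (hS : S.Monic) :
        algebraMap ℚ_[p] (AlgebraicClosure ℚ_[p])
            (S.resultant (P.map (algebraMap ℤ ℚ_[p])) S.natDegree n) =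
          ((S.map (algebraMap ℚ_[p] (AlgebraicClosure ℚ_[p]))).roots.map
            fun β => aeval β P).prod := by
      rw [hS.algebraMap_resultant (IsAlgClosed.splits _) (natDegree_map_le.trans hP)]
      simp only [aeval_map_algebraMap]
    exact h P _ _ (hroots hQ) (hroots hR)
  have hQR : Q ∣ R := dvd_of_forall_norm_resultant_le hQ.ne_zero fun P hP =>
    Padic.norm_resultant_le_of_forall_int (hint P.natDegree) le_rfl hP
  exact ⟨hQR, roots.le_of_dvd (hR.map _).ne_zero (Polynomial.map_dvd _ hQR)⟩
end

section
/- For every prime p and all natural numbers d, d', s with d' ≤ d, there exists a natural number h = h_1(d, d', p, s) with the following property. Let K be an algebraically closed field of characteristic 0 equipped with a multiplicative valuation v (taking values in a linearly ordered commutative group with zero) of mixed characteristic (0, p), i.e. 0 < v(p) < 1. Let Q(x) ∈ K[x] be a monic polynomial of degree d with roots α_1, …, α_d listed with multiplicity. If v(Q(p^i)) ≤ v(p)^{i·d'} for every integer i with 1 ≤ i ≤ h, then at least d' of the roots α_j (counted with multiplicity) satisfy v(α_j) ≤ v(p)^s. -/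
/-!
For a fixed `α`, the inequality `v (pⁱ - α) < v(p)ⁱ` holds for at most one exponent `i`, because
`v (pⁱ - pʲ) = v(p)ⁱ` for `i < j`. So among any `d + 1` consecutive exponents some `i` satisfies
`v(p)ⁱ ≤ v (pⁱ - α)` for all `d` roots at once. Take the window above `s·d + s`. In
`Q(pⁱ) = ∏ (pⁱ - α)`, each of the `m` roots with `v α ≤ v(p)ˢ` contributes at least `v(p)ⁱ`, and each
of the other roots contributes `v α > v(p)ˢ`. Hence `v(p)^(i·m + s·(d - m)) ≤ v(p)^(i·d')`, and since
`s·d < i` this forces `d' ≤ m`.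
-/

open Polynomial Multiset

namespace Valuation

variable {R Γ₀ : Type*} [LinearOrderedCommGroupWithZero Γ₀]

section Ring

variable [Ring R] (v : Valuation R Γ₀) {x : R}

theorem map_pow_sub_pow_of_lt_one (hx : v x < 1) {i j : ℕ} (hij : i < j) :
    v (x ^ i - x ^ j) = v x ^ i := by
  have hsmall : v (x ^ (j - i)) < 1 := by
    rw [map_pow]
    exact pow_lt_one₀ zero_le hx (by omega)
  rw [← Nat.add_sub_cancel' hij.le, pow_add, ← mul_one_sub, map_mul, map_pow,
    v.map_one_sub_of_lt hsmall, mul_one]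

theorem subsingleton_setOf_map_pow_sub_lt (hx : v x < 1) (α : R) :
    {i : ℕ | v (x ^ i - α) < v x ^ i}.Subsingleton := by
  intro i hi j hj
  wlog hij : i < j generalizing i j
  · rcases (not_lt.1 hij).lt_or_eq with h | h
    · exact (this hj hi h).symm
    · exact h.symm
  have hdiff : v (x ^ i - x ^ j) < v x ^ i := by
    rw [← sub_sub_sub_cancel_right (x ^ i) (x ^ j) α]
    exact (v.map_sub _ _).trans_lt
      (max_lt hi (hj.trans_le (pow_le_pow_right_of_le_one' hx.le hij.le)))
  exact absurd (v.map_pow_sub_pow_of_lt_one hx hij) hdiff.ne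

theorem exists_mem_Icc_forall_pow_le_map_pow_sub (hx : v x < 1) (S : Finset R) (a : ℕ) :
    ∃ i ∈ Finset.Icc a (a + S.card), ∀ α ∈ S, v x ^ i ≤ v (x ^ i - α) := by
  by_contra! h
  choose! f hfS hf using h
  have hinj : Set.InjOn f (Finset.Icc a (a + S.card)) := fun i hi j hj hij =>
    v.subsingleton_setOf_map_pow_sub_lt hx (f i) (hf i hi)
      (by rw [Set.mem_ofPred_eq, hij]; exact hf j hj)
  have hcard := Finset.card_le_card_of_injOn f hfS hinj
  rw [Nat.card_Icc] at hcard
  omega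

end Ring

section Domain

variable [CommRing R] [IsDomain R] (v : Valuation R Γ₀) {Q : R[X]}

theorem pow_card_mul_pow_card_le_map_eval (hQ : Q.Monic) (hsplit : Q.Splits) {y : R} {t : Γ₀}
    (hyt : v y ≤ t) (hroots : ∀ α ∈ Q.roots, v y ≤ v (y - α)) :
    v y ^ card (Q.roots.filter (v · ≤ t)) * t ^ card (Q.roots.filter (¬ v · ≤ t)) ≤
      v (Q.eval y) := by
  have hprod : v (Q.eval y) = ((Q.roots.filter (v · ≤ t)).map fun α => v (y - α)).prod *
      ((Q.roots.filter (¬ v · ≤ t)).map fun α => v (y - α)).prod := by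
    rw [hsplit.eval_eq_prod_roots_of_monic hQ, map_multiset_prod, Multiset.map_map, ← prod_add,
      ← Multiset.map_add, filter_add_not]
    rfl
  rw [hprod]
  refine mul_le_mul' ?_ ?_ <;> rw [← card_map (fun α => v (y - α))] <;>
    refine pow_card_le_prod fun _ hmem => ?_ <;> obtain ⟨α, hα, rfl⟩ := mem_map.1 hmem
  · exact hroots α (mem_of_mem_filter hα)
  · have hvα : t < v α := not_le.1 (mem_filter.1 hα).2
    exact hvα.le.trans_eq (v.map_sub_eq_of_lt_right (hyt.trans_lt hvα)).symm

theorem le_card_filter_roots_of_map_eval_pow_le (hQ : Q.Monic) (hsplit : Q.Splits) {x : R}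
    (hx0 : 0 < v x) (hx1 : v x < 1) {i s d' : ℕ} (hsi : s ≤ i) (hdeg : s * Q.natDegree < i)
    (hroots : ∀ α ∈ Q.roots, v x ^ i ≤ v (x ^ i - α))
    (heval : v (Q.eval (x ^ i)) ≤ v x ^ (i * d')) :
    d' ≤ card (Q.roots.filter (v · ≤ v x ^ s)) := by
  have hvx : v (x ^ i) ≤ v x ^ s := by
    rw [map_pow]
    exact pow_le_pow_right_of_le_one' hx1.le hsi
  have hle := (v.pow_card_mul_pow_card_le_map_eval hQ hsplit hvx
    (by simpa only [map_pow] using hroots)).trans heval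
  rw [map_pow, ← pow_mul, ← pow_mul, ← pow_add, pow_le_pow_iff_right_of_lt_one₀ hx0 hx1] at hle
  set m := card (Q.roots.filter (v · ≤ v x ^ s))
  set n := card (Q.roots.filter (¬ v · ≤ v x ^ s))
  have hmn : m + n = Q.natDegree := by
    rw [← card_add, filter_add_not, hsplit.natDegree_eq_card_roots]
  have hsn : s * n ≤ s * Q.natDegree := Nat.mul_le_mul_left s (by omega)
  have hd' : i * d' < i * (m + 1) := by
    rw [mul_add, mul_one]
    omega
  exact Nat.lt_succ_iff.1 (Nat.lt_of_mul_lt_mul_left hd')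

end Domain

end Valuation

theorem stmt1_general (p : ℕ) (d d' s : ℕ) :
    ∃ h : ℕ, ∀ (K : Type) [Field K] [IsAlgClosed K] [CharZero K]
      (Γ₀ : Type) [LinearOrderedCommGroupWithZero Γ₀] (v : Valuation K Γ₀),
      0 < v (p : K) → v (p : K) < 1 →
      ∀ Q : Polynomial K, Q.Monic → Q.natDegree = d →
      (∀ i : ℕ, 1 ≤ i → i ≤ h → v (Q.eval ((p : K) ^ i)) ≤ v (p : K) ^ (i * d')) →
      d' ≤ Multiset.card (Q.roots.filter (fun α => v α ≤ v (p : K) ^ s)) := by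
  refine ⟨s * d + s + d + 1, fun K _ _ _ Γ₀ _ v hv0 hv1 Q hmon hdeg hval => ?_⟩
  classical
  have hcard : Q.roots.toFinset.card ≤ d :=
    (toFinset_card_le _).trans (hdeg ▸ card_roots' Q)
  obtain ⟨i, hi, hgood⟩ :=
    v.exists_mem_Icc_forall_pow_le_map_pow_sub hv1 Q.roots.toFinset (s * d + s + 1)
  rw [Finset.mem_Icc] at hi
  exact v.le_card_filter_roots_of_map_eval_pow_le hmon (IsAlgClosed.splits Q) hv0 hv1
    (by omega) (by rw [hdeg]; omega) (fun α hα => hgood α (mem_toFinset.2 hα))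
    (hval i (by omega) (by omega))

/-- For every prime `p` and naturals `d' ≤ d` and `s`, there is `h = h₁(d,d',p,s)`
such that: for every algebraically closed valued field `K` of mixed
characteristic `(0, p)` (i.e. `char K = 0` and `0 < v(p) < 1`, with `v` a
multiplicative valuation into a linearly ordered commutative group with zero),
and every monic polynomial `Q ∈ K[x]` of degree `d`, if
`v(Q(pⁱ)) ≤ v(p)^(i·d')` for all `1 ≤ i ≤ h`, then at least `d'` of the roots
`α` of `Q` (counted with multiplicity) satisfy `v(α) ≤ v(p)^s`. -/
theorem stmt1 (p : ℕ) (hp : p.Prime) (d d' s : ℕ) (hd : d' ≤ d) :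
    ∃ h : ℕ, ∀ (K : Type) [Field K] [IsAlgClosed K] [CharZero K]
      (Γ₀ : Type) [LinearOrderedCommGroupWithZero Γ₀] (v : Valuation K Γ₀),
      0 < v (p : K) → v (p : K) < 1 →
      ∀ Q : Polynomial K, Q.Monic → Q.natDegree = d →
      (∀ i : ℕ, 1 ≤ i → i ≤ h → v (Q.eval ((p : K) ^ i)) ≤ v (p : K) ^ (i * d')) →
      d' ≤ Multiset.card (Q.roots.filter (fun α => v α ≤ v (p : K) ^ s)) :=
  stmt1_general p d d' s
end

section
/- Let p be a prime, k ≥ 1, q = p^k, and let F be a finite field with q elements. Let A be a commutative local ring that is an F-algebra of finite dimension n = dim_F A with n < q, and let f : A → F be an F-algebra homomorphism. Then for every a ∈ A one has a^q = ι(f(a)), where ι : F → A is the structure map. In other words, the q-th power map on A equals the composite A → F → A; equivalently, x^q = 0 for every x in the maximal ideal of A. (This expresses that the q-th power Frobenius on a finite connected group scheme of length n < q over F is the zero endomorphism.) -/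
/-- Let `q = p^k` and let `F` be a finite field with `q` elements.  Let `A` be a
commutative local `F`-algebra of finite dimension `n = dim_F A < q`, and let
`f : A → F` be an `F`-algebra homomorphism.  Then for every `a ∈ A` one has
`a^q = ι(f(a))`, where `ι : F → A` is the structure map: the `q`-th power map
on `A` is the composite `A → F → A`. -/
theorem stmt2 (p k : ℕ) (hp : p.Prime) (hk : 1 ≤ k) (q : ℕ) (hq : q = p ^ k)
    (F : Type) [Field F] [Fintype F] (hF : Fintype.card F = q)
    (A : Type) [CommRing A] [IsLocalRing A] [Algebra F A] [FiniteDimensional F A]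
    (hn : Module.finrank F A < q)
    (f : A →ₐ[F] F) :
    ∀ a : A, a ^ q = algebraMap F A (f a) := by
  -- characteristic
  have hpF : CharP F p := by
    obtain ⟨r, hr⟩ := CharP.exists F
    obtain ⟨m, hrp, hcard⟩ := FiniteField.card F r
    have : p ∣ r ^ (m : ℕ) := by
      rw [← hcard, hF, hq]
      exact dvd_pow_self p (by omega)
    have hpr : p = r := ((Nat.prime_dvd_prime_iff_eq hp hrp).mp
      (hp.dvd_of_dvd_pow this))
    rwa [hpr]
  haveI := hpF
  haveI := Fact.mk hp
  haveI : CharP A p := charP_of_injective_algebraMap (algebraMap F A).injective p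
  haveI : ExpChar A p := ExpChar.prime hp
  haveI : IsArtinianRing A := isArtinian_of_tower F inferInstance
  intro a
  set x := a - algebraMap F A (f a) with hxdef
  have hfx : f x = 0 := by
    simp [hxdef]
  -- x is in the maximal ideal, hence nilpotent
  have hxmem : x ∈ IsLocalRing.maximalIdeal A := by
    rw [IsLocalRing.mem_maximalIdeal]
    intro hu
    exact not_isUnit_zero (hfx ▸ hu.map f)
  have hnil : IsNilpotent x := by
    obtain ⟨m, hm⟩ := IsArtinianRing.isNilpotent_jacobson_bot (R := A)
    rw [IsLocalRing.jacobson_eq_maximalIdeal (⊥ : Ideal A) bot_ne_top] at hm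
    exact ⟨m, by simpa [hm] using Ideal.pow_mem_pow hxmem m⟩
  -- nilpotent elements satisfy x ^ finrank = 0
  have hxn : x ^ Module.finrank F A = 0 := by
    have hφ : IsNilpotent (Algebra.lmul F A x) := hnil.map (Algebra.lmul F A)
    have hchar := hφ.charpoly_eq_X_pow_finrank
    have := LinearMap.aeval_self_charpoly (Algebra.lmul F A x)
    rw [hchar] at this
    simp only [map_pow, Polynomial.aeval_X] at this
    have h2 : (Algebra.lmul F A) (x ^ Module.finrank F A) = 0 := by
      rw [map_pow]; exact this
    simpa using congrArg (fun φ => φ 1) h2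
  have hn0 : 0 < Module.finrank F A := Module.finrank_pos
  have hxq : x ^ q = 0 := by
    have : q = Module.finrank F A + (q - Module.finrank F A) := by omega
    rw [this, pow_add, hxn, zero_mul]
  have ha : a = algebraMap F A (f a) + x := by ring
  calc a ^ q = (algebraMap F A (f a) + x) ^ p ^ k := by rw [← ha, hq]
    _ = algebraMap F A (f a) ^ p ^ k + x ^ p ^ k := add_pow_char_pow ..
    _ = algebraMap F A ((f a) ^ q) := by rw [← hq, hxq, add_zero, map_pow]
    _ = algebraMap F A (f a) := by rw [← hF, FiniteField.pow_card]
end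

section
/- Let α_1, …, α_m and β_1, …, β_ℓ be nonzero algebraic integers (nonzero elements of ℂ, or of a fixed algebraic closure of ℚ, each integral over ℤ). Suppose that for every integer n ≥ 1 the number Σ_{i=1}^m α_i^n − Σ_{j=1}^ℓ β_j^n is a rational integer. Then Σ_{i=1}^m α_i^{-1} − Σ_{j=1}^ℓ β_j^{-1} is a rational number. -/
/-- If `α₁, …, α_m` and `β₁, …, β_ℓ` are nonzero algebraic integers such that
`Σ αᵢⁿ − Σ βⱼⁿ` is a rational integer for every `n ≥ 1`, then
`Σ αᵢ⁻¹ − Σ βⱼ⁻¹` is a rational number. -/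
theorem stmt6 (m l : ℕ) (α : Fin m → ℂ) (β : Fin l → ℂ)
    (hα0 : ∀ i, α i ≠ 0) (hβ0 : ∀ j, β j ≠ 0)
    (hαint : ∀ i, IsIntegral ℤ (α i)) (hβint : ∀ j, IsIntegral ℤ (β j))
    (h : ∀ n : ℕ, 1 ≤ n → ∃ z : ℤ,
      (∑ i, α i ^ n) - (∑ j, β j ^ n) = (z : ℂ)) :
    ∃ r : ℚ, (∑ i, (α i)⁻¹) - (∑ j, (β j)⁻¹) = (r : ℂ) := by
  classical
  have hαQ : ∀ i, IsIntegral ℚ (α i) := fun i => (hαint i).tower_top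
  have hβQ : ∀ j, IsIntegral ℚ (β j) := fun j => (hβint j).tower_top
  set P : Polynomial ℚ :=
    (∏ i, minpoly ℚ (α i)) * ∏ j, minpoly ℚ (β j) with hP
  set d : ℕ := P.natDegree with hd
  -- the constant coefficient of P is nonzero
  have hc0 : P.coeff 0 ≠ 0 := by
    rw [Polynomial.coeff_zero_eq_eval_zero, hP, Polynomial.eval_mul,
      Polynomial.eval_prod, Polynomial.eval_prod]
    apply mul_ne_zero
    · apply Finset.prod_ne_zero_iff.2
      intro i _
      rw [← Polynomial.coeff_zero_eq_eval_zero]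
      exact minpoly.coeff_zero_ne_zero (hαQ i) (hα0 i)
    · apply Finset.prod_ne_zero_iff.2
      intro j _
      rw [← Polynomial.coeff_zero_eq_eval_zero]
      exact minpoly.coeff_zero_ne_zero (hβQ j) (hβ0 j)
  -- each αᵢ and βⱼ is a root of P
  have hPα : ∀ i, Polynomial.aeval (α i) P = 0 := by
    intro i
    rw [hP, map_mul]
    simp only [map_prod]
    have : ∏ k, Polynomial.aeval (α i) (minpoly ℚ (α k)) = 0 :=
      Finset.prod_eq_zero (Finset.mem_univ i) (minpoly.aeval ℚ (α i))
    rw [this, zero_mul]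
  have hPβ : ∀ j, Polynomial.aeval (β j) P = 0 := by
    intro j
    rw [hP, map_mul]
    simp only [map_prod]
    have : ∏ k, Polynomial.aeval (β j) (minpoly ℚ (β k)) = 0 :=
      Finset.prod_eq_zero (Finset.mem_univ j) (minpoly.aeval ℚ (β j))
    rw [this, mul_zero]
  -- key identity: c₀ γ⁻¹ = -∑ coeff(k+1) γ^k for any nonzero root γ
  have key : ∀ γ : ℂ, γ ≠ 0 → Polynomial.aeval γ P = 0 →
      (P.coeff 0 : ℂ) * γ⁻¹ =
        -∑ k ∈ Finset.range d, (P.coeff (k + 1) : ℂ) * γ ^ k := by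
    intro γ hγ hroot
    have h1 : ∑ k ∈ Finset.range (d + 1), (P.coeff k : ℂ) * γ ^ k = 0 := by
      have heq := Polynomial.aeval_eq_sum_range (R := ℚ) (S := ℂ) (p := P) γ
      rw [heq] at hroot
      simpa [Algebra.smul_def] using hroot
    rw [Finset.sum_range_succ'] at h1
    simp only [pow_zero, mul_one] at h1
    have h2 : (P.coeff 0 : ℂ) =
        -∑ k ∈ Finset.range d, (P.coeff (k + 1) : ℂ) * γ ^ (k + 1) := by
      linear_combination h1
    calc (P.coeff 0 : ℂ) * γ⁻¹
        = (-∑ k ∈ Finset.range d, (P.coeff (k + 1) : ℂ) * γ ^ (k + 1)) * γ⁻¹ := by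
          rw [← h2]
      _ = -∑ k ∈ Finset.range d, (P.coeff (k + 1) : ℂ) * γ ^ k := by
          rw [neg_mul, Finset.sum_mul]
          congr 1
          apply Finset.sum_congr rfl
          intro k _
          rw [mul_assoc, pow_succ, mul_assoc, mul_inv_cancel₀ hγ, mul_one]
  -- integer values of the power sum differences
  have hz' : ∀ k : ℕ, ∃ zk : ℤ, (∑ i, α i ^ k) - (∑ j, β j ^ k) = (zk : ℂ) := by
    intro k
    rcases Nat.eq_zero_or_pos k with hk | hk
    · refine ⟨(m : ℤ) - l, ?_⟩
      subst hk
      simp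
    · exact h k hk
  choose z hz using hz'
  -- main computation
  have hα' : ∀ i, (P.coeff 0 : ℂ) * (α i)⁻¹ =
      -∑ k ∈ Finset.range d, (P.coeff (k + 1) : ℂ) * (α i) ^ k :=
    fun i => key (α i) (hα0 i) (hPα i)
  have hβ' : ∀ j, (P.coeff 0 : ℂ) * (β j)⁻¹ =
      -∑ k ∈ Finset.range d, (P.coeff (k + 1) : ℂ) * (β j) ^ k :=
    fun j => key (β j) (hβ0 j) (hPβ j)
  have e1 : ∑ i, ∑ k ∈ Finset.range d, (P.coeff (k + 1) : ℂ) * (α i) ^ k =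
      ∑ k ∈ Finset.range d, (P.coeff (k + 1) : ℂ) * ∑ i, (α i) ^ k := by
    rw [Finset.sum_comm]
    exact Finset.sum_congr rfl fun k _ => (Finset.mul_sum _ _ _).symm
  have e2 : ∑ j, ∑ k ∈ Finset.range d, (P.coeff (k + 1) : ℂ) * (β j) ^ k =
      ∑ k ∈ Finset.range d, (P.coeff (k + 1) : ℂ) * ∑ j, (β j) ^ k := by
    rw [Finset.sum_comm]
    exact Finset.sum_congr rfl fun k _ => (Finset.mul_sum _ _ _).symm
  have main : (P.coeff 0 : ℂ) * ((∑ i, (α i)⁻¹) - ∑ j, (β j)⁻¹) =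
      -∑ k ∈ Finset.range d, (P.coeff (k + 1) : ℂ) * ((z k : ℤ) : ℂ) := by
    calc (P.coeff 0 : ℂ) * ((∑ i, (α i)⁻¹) - ∑ j, (β j)⁻¹)
        = (∑ i, (P.coeff 0 : ℂ) * (α i)⁻¹) - ∑ j, (P.coeff 0 : ℂ) * (β j)⁻¹ := by
          rw [mul_sub, Finset.mul_sum, Finset.mul_sum]
      _ = (∑ i, -∑ k ∈ Finset.range d, (P.coeff (k + 1) : ℂ) * (α i) ^ k)
            - ∑ j, -∑ k ∈ Finset.range d, (P.coeff (k + 1) : ℂ) * (β j) ^ k := by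
          rw [Finset.sum_congr rfl fun i _ => hα' i,
            Finset.sum_congr rfl fun j _ => hβ' j]
      _ = -((∑ k ∈ Finset.range d, (P.coeff (k + 1) : ℂ) * ∑ i, (α i) ^ k)
            - ∑ k ∈ Finset.range d, (P.coeff (k + 1) : ℂ) * ∑ j, (β j) ^ k) := by
          rw [Finset.sum_neg_distrib, Finset.sum_neg_distrib, e1, e2]
          ring
      _ = -∑ k ∈ Finset.range d,
            (P.coeff (k + 1) : ℂ) * ((∑ i, (α i) ^ k) - ∑ j, (β j) ^ k) := by
          rw [← Finset.sum_sub_distrib]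
          congr 1
          exact Finset.sum_congr rfl fun k _ => (mul_sub _ _ _).symm
      _ = -∑ k ∈ Finset.range d, (P.coeff (k + 1) : ℂ) * ((z k : ℤ) : ℂ) := by
          congr 1
          exact Finset.sum_congr rfl fun k _ => by rw [hz k]
  refine ⟨(-∑ k ∈ Finset.range d, P.coeff (k + 1) * (z k : ℚ)) / P.coeff 0, ?_⟩
  have hc0' : ((P.coeff 0 : ℚ) : ℂ) ≠ 0 := by exact_mod_cast hc0
  rw [Rat.cast_div, eq_div_iff hc0', mul_comm, main]
  push_cast
  ring
end

section
/- Let p be a prime, k ≥ 1, q = p^k, and let F be a finite field with q^4 elements (the field 𝔽_{q^4}). Then q ≡ 2 (mod 5) if and only if p ≠ 5 and every x ∈ F with x^5 = 1 satisfies x^q = x^2. -/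
/-- Let `p` be a prime, `q = p^k`, and let `F` be the finite field with `q^4`
elements.  Then `q ≡ 2 (mod 5)` if and only if `p ≠ 5` and every fifth root of
unity `x ∈ F` satisfies `x^q = x^2`. -/
theorem stmt11 (p k : ℕ) (hp : p.Prime) (hk : 1 ≤ k) (q : ℕ) (hq : q = p ^ k)
    (F : Type) [Field F] [Fintype F] (hF : Fintype.card F = q ^ 4) :
    q % 5 = 2 ↔ (p ≠ 5 ∧ ∀ x : F, x ^ 5 = 1 → x ^ q = x ^ 2) := by
  have hq1 : 1 ≤ q := hq ▸ Nat.one_le_pow _ _ hp.pos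
  constructor
  · intro h2
    have hp5 : p ≠ 5 := by
      rintro rfl
      have h5 : 5 ∣ q := hq ▸ dvd_pow_self 5 (by omega)
      omega
    refine ⟨hp5, fun x hx => ?_⟩
    have hqe : q = 5 * (q / 5) + 2 := by omega
    rw [hqe, pow_add, pow_mul, hx, one_pow, one_mul]
  · rintro ⟨hp5, hall⟩
    have hm : q % 5 ≠ 0 := by
      intro h
      have h5 : 5 ∣ q := Nat.dvd_of_mod_eq_zero h
      have h5p : (5 : ℕ).Prime := by norm_num
      have := (Nat.prime_dvd_prime_iff_eq h5p hp).mp (h5p.dvd_of_dvd_pow (hq ▸ h5))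
      exact hp5 this.symm
    have hq4 : q ^ 4 % 5 = 1 := by
      have hr : q % 5 = 1 ∨ q % 5 = 2 ∨ q % 5 = 3 ∨ q % 5 = 4 := by omega
      rw [Nat.pow_mod]
      rcases hr with h | h | h | h <;> rw [h] <;> decide
    classical
    have hcard : Fintype.card Fˣ = q ^ 4 - 1 := by
      rw [Fintype.card_units, hF]
    have hdvd : 5 ∣ Fintype.card Fˣ := by
      rw [hcard]
      have : 1 ≤ q ^ 4 := Nat.one_le_pow _ _ (by omega)
      omega
    haveI : Fact (Nat.Prime 5) := ⟨by norm_num⟩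
    obtain ⟨g, hg⟩ := exists_prime_orderOf_dvd_card 5 hdvd
    have hg5 : (g : F) ^ 5 = 1 := by
      have := pow_orderOf_eq_one g
      rw [hg] at this
      simpa using congrArg Units.val this
    have hgq : g ^ q = g ^ 2 := by
      have := hall (g : F) hg5
      ext
      push_cast
      exact this
    have := (pow_eq_pow_iff_modEq.mp hgq)
    rw [hg] at this
    have h2 : q % 5 = 2 % 5 := this
    omega
end
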